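/- Let n ≥ 4, let l ≥ 2 be an integer and let r ≥ 1 be an odd integer. Then in the quasi-abelian group QA_n there exist an element d ∈ QA_n \ H_1, elements a_1, …, a_l ∈ H_1 each of order 2, and elements b_1, …, b_r ∈ H_1 each of order 2^{n-2}, such that a_1 ⋯ a_l · b_1 ⋯ b_r · d^2 = 1 and the set {d, a_1, …, a_l, b_1, …, b_r} generates QA_n. -/

import Mathlib

/-- The relators of the quasi-abelian group `QA_n`:
`x^(2^(n-1)) = 1`, `y^2 = 1`, `y * x * y⁻¹ = x^(2^(n-2)+1)`.
The generator `x` is encoded by `true` and `y` by `false`. -/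
def qaRels (n : ℕ) : Set (FreeGroup Bool) :=
  {FreeGroup.of true ^ 2 ^ (n - 1),
   FreeGroup.of false ^ 2,
   FreeGroup.of false * FreeGroup.of true * (FreeGroup.of false)⁻¹ *
     (FreeGroup.of true ^ (2 ^ (n - 2) + 1))⁻¹}

/-- The quasi-abelian group `QA_n`, given by the presentation
`⟨x, y ∣ x^(2^(n-1)) = y^2 = 1, y x y⁻¹ = x^(2^(n-2)+1)⟩`. -/
abbrev QA (n : ℕ) : Type := PresentedGroup (qaRels n)

/-- The generator `x` of `QA_n`. -/
def qx (n : ℕ) : QA n := PresentedGroup.of true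

/-- The generator `y` of `QA_n`. -/
def qy (n : ℕ) : QA n := PresentedGroup.of false

/-- The index-two subgroup `H₁ = ⟨x², y⟩` of `QA_n`. -/
def H1 (n : ℕ) : Subgroup (QA n) := Subgroup.closure {qx n ^ 2, qy n}

/-!
Take `d = x`, `a = (y, y, t, …, t)` with `t = x^(2^(n-2))`, and
`b = ((x^(2k))⁻¹, x², …, x²)` with `k = 2^(n-3)(l-2) + r`, which is odd because `r` is; then
`y² = 1` collapses the product to a power of `x` with exponent `0`. The orders follow from
`orderOf x = 2^(n-1)`, witnessed by the action of `QA_n` on `ZMod (2^(n-1))` with `x` acting as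
`z ↦ z + 1` and `y` as `z ↦ (2^(n-2) + 1) z`; and `x ∉ H₁` because the sign character
`x ↦ -1`, `y ↦ 1` kills `H₁`.
-/

section OrderOfPow

variable {G : Type*} [Monoid G] {g : G} {j : ℕ}

lemma orderOf_pow_two_pow_eq_two (hg : orderOf g = 2 ^ (j + 1)) : orderOf (g ^ 2 ^ j) = 2 :=
  orderOf_eq_prime (by rw [← pow_mul, ← pow_succ, ← hg, pow_orderOf_eq_one])
    (pow_ne_one_of_lt_orderOf (by positivity) (by rw [hg]; exact Nat.pow_lt_pow_succ one_lt_two))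

lemma orderOf_pow_two_mul_of_odd (hg : orderOf g = 2 ^ (j + 1)) {k : ℕ} (hk : Odd k) :
    orderOf (g ^ (2 * k)) = 2 ^ j := by
  have hsq : orderOf (g ^ 2) = 2 ^ j := by
    rw [orderOf_pow' g two_ne_zero, hg, Nat.gcd_eq_right (dvd_pow_self 2 j.succ_ne_zero),
      pow_succ, Nat.mul_div_cancel _ two_pos]
  rw [pow_mul, Nat.Coprime.orderOf_pow (hsq ▸ Nat.Coprime.pow_left j hk.coprime_two_left), hsq]

end OrderOfPow

lemma two_pow_sub_two_add_one_sq {n : ℕ} (hn : 3 ≤ n) :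
    ((2 : ZMod (2 ^ (n - 1))) ^ (n - 2) + 1) * (2 ^ (n - 2) + 1) = 1 := by
  obtain ⟨k, rfl⟩ : ∃ k, n = k + 3 := ⟨n - 3, by omega⟩
  have hmod : (2 : ZMod (2 ^ (k + 2))) ^ (k + 2) = 0 := by
    exact_mod_cast ZMod.natCast_self (2 ^ (k + 2))
  show ((2 : ZMod (2 ^ (k + 2))) ^ (k + 1) + 1) * (2 ^ (k + 1) + 1) = 1
  calc ((2 : ZMod (2 ^ (k + 2))) ^ (k + 1) + 1) * (2 ^ (k + 1) + 1)
      = 2 ^ (k + 2) * (2 ^ k + 1) + 1 := by ring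
    _ = 1 := by rw [hmod, zero_mul, zero_add]

lemma two_pow_sub_two_ne_zero {n : ℕ} (hn : 2 ≤ n) :
    (2 : ZMod (2 ^ (n - 1))) ^ (n - 2) ≠ 0 := by
  obtain ⟨k, rfl⟩ : ∃ k, n = k + 2 := ⟨n - 2, by omega⟩
  show (2 : ZMod (2 ^ (k + 1))) ^ k ≠ 0
  exact_mod_cast (ZMod.natCast_eq_zero_iff _ _).not.mpr
    (by rw [Nat.pow_dvd_pow_iff_le_right (by norm_num)]; omega)

namespace QA

variable {n : ℕ}

lemma qx_pow_two_pow_eq_one (n : ℕ) : qx n ^ 2 ^ (n - 1) = 1 :=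
  (map_pow _ _ _).symm.trans (PresentedGroup.one_of_mem (Set.mem_insert _ _))

lemma qy_sq (n : ℕ) : qy n ^ 2 = 1 :=
  (map_pow _ _ _).symm.trans (PresentedGroup.one_of_mem (by simp [qaRels]))

lemma closure_qx_qy (n : ℕ) : Subgroup.closure {qx n, qy n} = ⊤ := by
  rw [eq_top_iff, ← PresentedGroup.closure_range_of, Subgroup.closure_le]
  rintro _ ⟨_ | _, rfl⟩ <;> exact Subgroup.subset_closure (by simp [qx, qy])

def lift {G : Type*} [Group G] (X Y : G) (hX : X ^ 2 ^ (n - 1) = 1) (hY : Y ^ 2 = 1)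
    (hXY : Y * X * Y⁻¹ = X ^ (2 ^ (n - 2) + 1)) : QA n →* G :=
  PresentedGroup.toGroup (f := fun b => cond b X Y) <| by
    rintro w (rfl | rfl | rfl) <;> simp [hX, hY, hXY]

section Lift

variable {G : Type*} [Group G] {X Y : G} {hX : X ^ 2 ^ (n - 1) = 1} {hY : Y ^ 2 = 1}
  {hXY : Y * X * Y⁻¹ = X ^ (2 ^ (n - 2) + 1)}

@[simp] lemma lift_qx : lift X Y hX hY hXY (qx n) = X := PresentedGroup.toGroup.of _

@[simp] lemma lift_qy : lift X Y hX hY hXY (qy n) = Y := PresentedGroup.toGroup.of _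

end Lift

lemma exists_hom_perm_zmod (hn : 3 ≤ n) : ∃ φ : QA n →* Equiv.Perm (ZMod (2 ^ (n - 1))),
    φ (qx n) = Equiv.addLeft 1 ∧ φ (qy n) 1 = 2 ^ (n - 2) + 1 := by
  have hu := two_pow_sub_two_add_one_sq hn
  let u : (ZMod (2 ^ (n - 1)))ˣ := ⟨2 ^ (n - 2) + 1, 2 ^ (n - 2) + 1, hu, hu⟩
  have hX : Equiv.addLeft (1 : ZMod (2 ^ (n - 1))) ^ 2 ^ (n - 1) = 1 := by
    ext t
    simp
  have hY : u.mulLeft ^ 2 = 1 := by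
    ext t
    simp [sq, u, ← mul_assoc, hu]
  have hXY :
      u.mulLeft * Equiv.addLeft 1 * u.mulLeft⁻¹ = Equiv.addLeft 1 ^ (2 ^ (n - 2) + 1) := by
    rw [mul_inv_eq_iff_eq_mul]
    ext t
    simp only [Equiv.Perm.mul_apply, Units.mulLeft_apply, Equiv.coe_addLeft, Equiv.nsmul_addLeft,
      nsmul_eq_mul, u]
    push_cast
    ring
  exact ⟨lift _ _ hX hY hXY, by simp, by simp [u]⟩

lemma orderOf_qx (hn : 3 ≤ n) : orderOf (qx n) = 2 ^ (n - 1) := by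
  obtain ⟨φ, hφx, -⟩ := exists_hom_perm_zmod hn
  have hne : ¬ qx n ^ 2 ^ (n - 2) = 1 := fun h =>
    two_pow_sub_two_ne_zero (n := n) (by omega) (by simpa [hφx] using congr(φ $h 0))
  have hpow := qx_pow_two_pow_eq_one n
  rw [show n - 1 = n - 2 + 1 by omega] at hpow ⊢
  exact orderOf_eq_prime_pow hne hpow

lemma orderOf_qy (hn : 3 ≤ n) : orderOf (qy n) = 2 := by
  obtain ⟨φ, -, hφy⟩ := exists_hom_perm_zmod hn
  refine orderOf_eq_prime (qy_sq n) fun h => two_pow_sub_two_ne_zero (n := n) (by omega) ?_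
  simpa [h] using hφy.symm

lemma qy_mem_H1 : qy n ∈ H1 n := Subgroup.subset_closure (by simp)

lemma qx_pow_mem_H1 {k : ℕ} (hk : Even k) : qx n ^ k ∈ H1 n := by
  obtain ⟨j, rfl⟩ := hk
  rw [← two_mul, pow_mul]
  exact Subgroup.pow_mem _ (Subgroup.subset_closure (by simp)) j

lemma qx_notMem_H1 (hn : 3 ≤ n) : qx n ∉ H1 n := by
  have hX : (-1 : ℤˣ) ^ 2 ^ (n - 1) = 1 :=
    (Nat.even_pow.mpr ⟨even_two, by omega⟩).neg_one_pow
  have hXY : (1 : ℤˣ) * -1 * 1⁻¹ = (-1) ^ (2 ^ (n - 2) + 1) := by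
    rw [(Nat.even_pow.mpr ⟨even_two, by omega⟩).add_one.neg_one_pow, one_mul, inv_one, mul_one]
  let χ := lift (-1 : ℤˣ) 1 hX (one_pow 2) hXY
  have hker : H1 n ≤ χ.ker := by
    rw [H1, Subgroup.closure_le]
    rintro _ (rfl | rfl) <;> simp [χ]
  intro h
  simpa [χ] using hker h

end QA

theorem stmt12_general (n l r : ℕ) (hn : 4 ≤ n) (hl : 2 ≤ l) (hrodd : Odd r) :
    ∃ (d : QA n) (a : Fin l → QA n) (b : Fin r → QA n),
      d ∉ H1 n ∧
      (∀ i, a i ∈ H1 n ∧ orderOf (a i) = 2) ∧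
      (∀ i, b i ∈ H1 n ∧ orderOf (b i) = 2 ^ (n - 2)) ∧
      (List.ofFn a).prod * (List.ofFn b).prod * d ^ 2 = 1 ∧
      Subgroup.closure ({d} ∪ Set.range a ∪ Set.range b) = (⊤ : Subgroup (QA n)) := by
  obtain ⟨q, rfl⟩ : ∃ q, l = q + 2 := ⟨l - 2, by omega⟩
  obtain ⟨s, rfl⟩ := hrodd
  have hx : orderOf (qx n) = 2 ^ (n - 2 + 1) := by rw [QA.orderOf_qx (by omega)]; congr 1; omega
  have htwo : 2 ^ (n - 2) = 2 * 2 ^ (n - 3) := by rw [← pow_succ']; congr 1; omega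
  set k := 2 ^ (n - 3) * q + (2 * s + 1) with hk_def
  have hk : Odd k :=
    ((Nat.even_pow.mpr ⟨even_two, by omega⟩).mul_right q).add_odd (odd_two_mul_add_one s)
  refine ⟨qx n, Fin.cons (qy n) (Fin.cons (qy n) fun _ => qx n ^ 2 ^ (n - 2)),
    Fin.cons (qx n ^ (2 * k))⁻¹ fun _ => qx n ^ 2, QA.qx_notMem_H1 (by omega), ?_, ?_, ?_, ?_⟩
  · have ht : qx n ^ 2 ^ (n - 2) ∈ H1 n ∧ orderOf (qx n ^ 2 ^ (n - 2)) = 2 :=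
      ⟨QA.qx_pow_mem_H1 (htwo ▸ even_two_mul _), orderOf_pow_two_pow_eq_two hx⟩
    have hy : qy n ∈ H1 n ∧ orderOf (qy n) = 2 := ⟨QA.qy_mem_H1, QA.orderOf_qy (by omega)⟩
    exact Fin.cases hy (Fin.cases hy fun _ => ht)
  · have hc : (qx n ^ (2 * k))⁻¹ ∈ H1 n ∧ orderOf (qx n ^ (2 * k))⁻¹ = 2 ^ (n - 2) :=
      ⟨inv_mem (QA.qx_pow_mem_H1 (even_two_mul k)),
        by rw [orderOf_inv, orderOf_pow_two_mul_of_odd hx hk]⟩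
    have hx2 : qx n ^ 2 ∈ H1 n ∧ orderOf (qx n ^ 2) = 2 ^ (n - 2) :=
      ⟨QA.qx_pow_mem_H1 even_two, by simpa using orderOf_pow_two_mul_of_odd hx odd_one⟩
    exact Fin.cases hc fun _ => hx2
  · simp only [List.ofFn_cons, List.ofFn_const, List.prod_cons, List.prod_replicate]
    rw [← mul_assoc (qy n), ← sq, QA.qy_sq, one_mul, htwo, hk_def]
    group
  · rw [eq_top_iff, ← QA.closure_qx_qy]
    refine Subgroup.closure_mono ?_
    rintro _ (rfl | rfl)
    · exact Or.inl (Or.inl rfl)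
    · exact Or.inl (Or.inr ⟨0, rfl⟩)

/-- For `n ≥ 4`, `l ≥ 2` and odd `r ≥ 1`, there exist `d ∈ QA_n \ H₁`, elements
`a₁, …, a_l ∈ H₁` of order `2` and `b₁, …, b_r ∈ H₁` of order `2^(n-2)` such that
`a₁ ⋯ a_l · b₁ ⋯ b_r · d² = 1` and `{d, a₁, …, a_l, b₁, …, b_r}` generates `QA_n`. -/
theorem stmt12 (n l r : ℕ) (hn : 4 ≤ n) (hl : 2 ≤ l) (hr : 1 ≤ r) (hrodd : Odd r) :
    ∃ (d : QA n) (a : Fin l → QA n) (b : Fin r → QA n),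
      d ∉ H1 n ∧
      (∀ i, a i ∈ H1 n ∧ orderOf (a i) = 2) ∧
      (∀ i, b i ∈ H1 n ∧ orderOf (b i) = 2 ^ (n - 2)) ∧
      (List.ofFn a).prod * (List.ofFn b).prod * d ^ 2 = 1 ∧
      Subgroup.closure ({d} ∪ Set.range a ∪ Set.range b) = (⊤ : Subgroup (QA n)) :=
  stmt12_general n l r hn hl hrodd
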